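/- For every 0 ≤ j ≤ l−1, one has ∑_{k=0}^{j} (−q^{l−1})^{−k} (f_i^{(k)} ⊗ 1) · Δ(f_i^{(l−k)}) = K_i^l ⊗ f_i^{(l)} + ∑_{k=0}^{l−j−1} (−1)^j q^{−(j+k)(l−k)} [l−k−1 choose j]_q f_i^{(l−k)} K_i^k ⊗ f_i^{(k)}, where [a choose b]_q denotes the Gaussian binomial coefficient. -/

import Mathlib

/-!
Induction on `j`. Multiplying `Δ(f_i^{(l-j-1)})` on the left by `f_i^{(j+1)} ⊗ 1` turns each
`f_i^{(l-j-1-k)}` into `[l-k choose j+1]_q f_i^{(l-k)}`; the `q`-Pascal rule merges this with the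
`k`-th term of the previous partial sum, and the term `k = l-j-1` cancels outright.
The `q`-Pascal rule needs `[l]_q ≠ 0`, which holds because sending `q` to a transcendental real
number embeds `ℚ(q)` in `ℝ`, where `[l]_q = q^{1-l} ∑_{i<l} (q^2)^i` is visibly nonzero.
-/

namespace QuantumGL

noncomputable section

/-- The field `ℚ(q)` of rational functions. -/
abbrev Qq := FractionRing (Polynomial ℚ)

open scoped TensorProduct

variable (q : Qqˣ)

/-- The balanced quantum integer `[l]_q = ∑_{i=0}^{l-1} q^{2i−l+1}`. -/
def qInt (l : ℕ) : Qq := ∑ i ∈ Finset.range l, ((q ^ (2 * (i : ℤ) - l + 1) : Qqˣ) : Qq)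

/-- The quantum factorial `[l]_q!`. -/
def qFact (l : ℕ) : Qq := ∏ i ∈ Finset.range l, qInt q (i + 1)

/-- The Gaussian binomial coefficient `[a choose b]_q = [a]_q!/([b]_q! [a−b]_q!)`. -/
def qBinom (l k : ℕ) : Qq := qFact q l / (qFact q k * qFact q (l - k))

variable {A : Type*} [Ring A] [Algebra Qq A]
  (F : ℕ → A) (K : Aˣ)

/-- The explicit formula for
`Δ(f_i^{(l)}) = ∑_{k=0}^{l} q^{−k(l−k)} f_i^{(l−k)} K_i^k ⊗ f_i^{(k)}`,
where `F l = f_i^{(l)}` and `K = K_i`. -/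
def comulF (l : ℕ) : A ⊗[Qq] A :=
  ∑ k ∈ Finset.range (l + 1),
    ((q ^ (-((k : ℤ) * ((l : ℤ) - (k : ℤ)))) : Qqˣ) : Qq) •
      ((F (l - k) * (K : A) ^ k) ⊗ₜ[Qq] F k)

theorem nonempty_ringHom_real : Nonempty (Qq →+* ℝ) := by
  have ht : Transcendental ℚ (liouvilleNumber 3) := fun h => transcendental_liouvilleNumber
    (by norm_num) ((IsFractionRing.isAlgebraic_iff ℤ ℚ ℝ).mpr h)
  exact ⟨IsFractionRing.lift (transcendental_iff_injective.mp ht)⟩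

theorem qInt_eq_zpow_mul_geom_sum (l : ℕ) :
    qInt q l = (q : Qq) ^ (1 - (l : ℤ)) * ∑ i ∈ Finset.range l, ((q : Qq) ^ 2) ^ i := by
  rw [qInt, Finset.mul_sum]
  refine Finset.sum_congr rfl fun i _ => ?_
  rw [Units.val_zpow_eq_zpow_val, ← pow_mul, ← zpow_natCast, ← zpow_add₀ q.ne_zero]
  congr 1
  push_cast
  ring

theorem qInt_ne_zero {l : ℕ} (hl : l ≠ 0) : qInt q l ≠ 0 := by
  obtain ⟨φ⟩ := nonempty_ringHom_real
  have hq : φ q ≠ 0 := (map_ne_zero φ).mpr q.ne_zero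
  rw [← map_ne_zero φ, qInt_eq_zpow_mul_geom_sum, map_mul, map_zpow₀, map_sum]
  simp only [map_pow]
  exact mul_ne_zero (zpow_ne_zero _ hq) (geom_sum_pos (sq_nonneg _) hl).ne'

theorem qFact_ne_zero (l : ℕ) : qFact q l ≠ 0 :=
  Finset.prod_ne_zero_iff.mpr fun i _ => qInt_ne_zero q i.succ_ne_zero

theorem qFact_succ (l : ℕ) : qFact q (l + 1) = qFact q l * qInt q (l + 1) :=
  Finset.prod_range_succ _ l

@[simp] theorem qFact_zero : qFact q 0 = 1 :=
  Finset.prod_range_zero _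

@[simp] theorem qBinom_zero_right (n : ℕ) : qBinom q n 0 = 1 := by
  simp [qBinom, qFact_ne_zero]

@[simp] theorem qBinom_self (n : ℕ) : qBinom q n n = 1 := by
  simp [qBinom, qFact_ne_zero]

theorem qInt_add (a b : ℕ) :
    qInt q (a + b) = (q : Qq) ^ (-(b : ℤ)) * qInt q a + (q : Qq) ^ (a : ℤ) * qInt q b := by
  simp only [qInt, Units.val_zpow_eq_zpow_val, Finset.sum_range_add, Finset.mul_sum,
    ← zpow_add₀ q.ne_zero]
  congr 1 <;> refine Finset.sum_congr rfl fun i _ => ?_ <;> congr 1 <;> push_cast <;> ring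

theorem qBinom_succ_succ {n r : ℕ} (h : r < n) :
    qBinom q (n + 1) (r + 1) =
      (q : Qq) ^ (-(r : ℤ) - 1) * qBinom q n (r + 1) +
        (q : Qq) ^ ((n : ℤ) - r) * qBinom q n r := by
  obtain ⟨m, rfl⟩ := Nat.exists_eq_add_of_lt h
  have hsplit := qInt_add q (m + 1) (r + 1)
  rw [show m + 1 + (r + 1) = r + m + 1 + 1 by ring] at hsplit
  simp only [qBinom, show r + m + 1 + 1 - (r + 1) = m + 1 by omega,
    show r + m + 1 - (r + 1) = m by omega, show r + m + 1 - r = m + 1 by omega,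
    qFact_succ q (r + m + 1), qFact_succ q m, qFact_succ q r, hsplit]
  field_simp [qFact_ne_zero, qInt_ne_zero]
  rw [show -(r : ℤ) - 1 = -((r + 1 : ℕ) : ℤ) by push_cast; ring,
    show ((r + m + 1 : ℕ) : ℤ) - r = ((m + 1 : ℕ) : ℤ) by push_cast; ring]
  ring

theorem tmul_one_mul_comulF (hFmul : ∀ k l : ℕ, F k * F l = qBinom q (k + l) k • F (k + l))
    (m n : ℕ) :
    (F m ⊗ₜ[Qq] (1 : A)) * comulF q F K n =
      ∑ k ∈ Finset.range (n + 1),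
        ((q : Qq) ^ (-((k : ℤ) * ((n : ℤ) - k))) * qBinom q (m + n - k) m) •
          ((F (m + n - k) * (K : A) ^ k) ⊗ₜ[Qq] F k) := by
  rw [comulF, Finset.mul_sum]
  refine Finset.sum_congr rfl fun k hk => ?_
  have hkn : m + (n - k) = m + n - k := by have := Finset.mem_range.mp hk; omega
  rw [mul_smul_comm, Algebra.TensorProduct.tmul_mul_tmul, one_mul, ← mul_assoc, hFmul, hkn,
    smul_mul_assoc, ← TensorProduct.smul_tmul', smul_smul, Units.val_zpow_eq_zpow_val]

theorem partial_sum_coeff_succ_of_lt {l j k : ℕ} (h : j + k + 1 < l) :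
    (-1 : Qq) ^ j * (q : Qq) ^ (-(((j : ℤ) + k) * ((l : ℤ) - k))) * qBinom q (l - k - 1) j +
        (-1) ^ (j + 1) * (q : Qq) ^ (-(((j + 1 : ℕ) : ℤ) * ((l : ℤ) - 1))) *
          ((q : Qq) ^ (-((k : ℤ) * (((l - (j + 1) : ℕ) : ℤ) - k))) *
            qBinom q (l - k) (j + 1)) =
      (-1) ^ (j + 1) * (q : Qq) ^ (-((((j + 1 : ℕ) : ℤ) + k) * ((l : ℤ) - k))) *
        qBinom q (l - k - 1) (j + 1) := by
  obtain ⟨n, rfl⟩ : ∃ n, l = j + n + 1 + k + 1 := ⟨l - (j + k + 2), by omega⟩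
  rw [show j + n + 1 + k + 1 - k - 1 = j + n + 1 by omega,
    show j + n + 1 + k + 1 - k = j + n + 1 + 1 by omega,
    show j + n + 1 + k + 1 - (j + 1) = n + 1 + k by omega,
    qBinom_succ_succ q (show j < j + n + 1 by omega)]
  push_cast
  set s : Qq := ↑q
  have hs : s ≠ 0 := q.ne_zero
  have h₁ : s ^ (-(((j : ℤ) + 1) * (j + n + 1 + k + 1 - 1))) *
      s ^ (-(k * ((n : ℤ) + 1 + k - k))) * s ^ ((j : ℤ) + n + 1 - j) =
      s ^ (-(((j : ℤ) + k) * (j + n + 1 + k + 1 - k))) := by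
    rw [← zpow_add₀ hs, ← zpow_add₀ hs]
    congr 1
    ring
  have h₂ : s ^ (-(((j : ℤ) + 1) * (j + n + 1 + k + 1 - 1))) *
      s ^ (-(k * ((n : ℤ) + 1 + k - k))) * s ^ (-(j : ℤ) - 1) =
      s ^ (-(((j : ℤ) + 1 + k) * (j + n + 1 + k + 1 - k))) := by
    rw [← zpow_add₀ hs, ← zpow_add₀ hs]
    congr 1
    ring
  linear_combination (-(-1 : Qq) ^ j * qBinom q (j + n + 1) j) * h₁ +
    ((-1 : Qq) ^ (j + 1) * qBinom q (j + n + 1) (j + 1)) * h₂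

theorem partial_sum_coeff_succ_of_eq {l j k : ℕ} (h : j + k + 1 = l) :
    (-1 : Qq) ^ j * (q : Qq) ^ (-(((j : ℤ) + k) * ((l : ℤ) - k))) * qBinom q (l - k - 1) j +
        (-1) ^ (j + 1) * (q : Qq) ^ (-(((j + 1 : ℕ) : ℤ) * ((l : ℤ) - 1))) *
          ((q : Qq) ^ (-((k : ℤ) * (((l - (j + 1) : ℕ) : ℤ) - k))) *
            qBinom q (l - k) (j + 1)) =
      0 := by
  subst h
  rw [show j + k + 1 - k - 1 = j by omega, show j + k + 1 - k = j + 1 by omega,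
    show j + k + 1 - (j + 1) = k by omega, qBinom_self, qBinom_self]
  push_cast
  set s : Qq := ↑q
  have h₁ : s ^ (-(((j : ℤ) + 1) * (j + k + 1 - 1))) * s ^ (-(k * ((k : ℤ) - k))) =
      s ^ (-(((j : ℤ) + k) * (j + k + 1 - k))) := by
    rw [← zpow_add₀ (q.ne_zero : s ≠ 0)]
    congr 1
    ring
  linear_combination (-(-1 : Qq) ^ j) * h₁

theorem divided_power_f_partial_sums
    (hF0 : F 0 = 1)
    (hFmul : ∀ k l : ℕ, F k * F l = qBinom q (k + l) k • F (k + l))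
    (l : ℕ) (j : ℕ) (hj : j ≤ l - 1) :
    ∑ k ∈ Finset.range (j + 1),
        ((-1 : Qq) ^ k * ((q ^ (-((k : ℤ) * ((l : ℤ) - 1))) : Qqˣ) : Qq)) •
          ((F k ⊗ₜ[Qq] (1 : A)) * comulF q F K (l - k)) =
      ((K : A) ^ l) ⊗ₜ[Qq] F l +
        ∑ k ∈ Finset.range (l - j),
          ((-1 : Qq) ^ j *
              ((q ^ (-(((j : ℤ) + (k : ℤ)) * ((l : ℤ) - (k : ℤ)))) : Qqˣ) : Qq) *
              qBinom q (l - k - 1) j) •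
            ((F (l - k) * (K : A) ^ k) ⊗ₜ[Qq] F k) := by
  simp only [Units.val_zpow_eq_zpow_val]
  induction j with
  | zero =>
    rw [Finset.sum_range_one, comulF, Finset.sum_range_succ, add_comm]
    simp [hF0, ← Algebra.TensorProduct.one_def]
  | succ j ih =>
    rw [Finset.sum_range_succ, ih (by omega), add_assoc, tmul_one_mul_comulF q F K hFmul,
      Nat.add_sub_cancel' (by omega : j + 1 ≤ l), show l - j = l - (j + 1) + 1 by omega,
      Finset.smul_sum, ← Finset.sum_add_distrib, Finset.sum_range_succ]
    simp only [smul_smul, ← add_smul]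
    rw [partial_sum_coeff_succ_of_eq q (by omega : j + (l - (j + 1)) + 1 = l), zero_smul, add_zero]
    refine congrArg _ (Finset.sum_congr rfl fun k hk => ?_)
    rw [partial_sum_coeff_succ_of_lt q (by have := Finset.mem_range.mp hk; omega)]

end

end QuantumGL
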